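/- Let p be a prime, s ≥ 1 a natural number, k₁, …, k_s and n₁, …, n_s natural numbers with k_i ≤ n_i for every i, and m₁, …, m_s natural numbers. Write K = k₁m₁ + ⋯ + k_s m_s and T = n₁m₁ + ⋯ + n_s m_s. Then, in ℚ_p, the sequence N ↦ (1/p^N) · ∑_{x=0}^{p^N − 1} ∏_{i=1}^{s} (B_{k_i,n_i}(x))^{m_i} tends (as N → ∞) to the rational number (∏_{i=1}^{s} C(n_i, k_i)^{m_i}) · ∑_{l=0}^{T − K} C(T − K, l) (−1)^l B_{K + l}, cast into ℚ_p. (Equivalently, ∫_{ℤ_p} B_{k₁,n₁}^{m₁}(x) ⋯ B_{k_s,n_s}^{m_s}(x) dμ₁(x) = C(n₁,k₁)^{m₁} ⋯ C(n_s,k_s)^{m_s} ∑_{l=0}^{T−K} C(T−K, l)(−1)^l B_{K+l}.) -/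

import Mathlib

/-!
After expanding, the integrand is `C · x^K (1 - x)^(T-K) = ∑ₗ C · C(T-K, l) (-1)^l x^(K+l)` with
`C = ∏ C(nᵢ, kᵢ)^mᵢ`, and Volkenborn sums are linear in the integrand, so it suffices that the
Volkenborn sums of `x^n` tend to `B_n`. By Faulhaber's formula,
`p^(-N) ∑_{x < p^N} x^n = ∑ᵢ B_i C(n+1, i)/(n+1) · (p^N)^(n-i)`, a polynomial in `p^N` with constant
term `B_n`, and `p^N → 0` in `ℚ_p`.
-/

open Filter Finset Topology

section CommRing

variable {R : Type*} [CommRing R]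

theorem prod_bernstein_pow_eq_mul {s : ℕ} (k n m : Fin s → ℕ) (hk : ∀ i, k i ≤ n i) (y : R) :
    ∏ i, (((n i).choose (k i) : R) * y ^ k i * (1 - y) ^ (n i - k i)) ^ m i =
      (∏ i, ((n i).choose (k i) : R) ^ m i) * y ^ (∑ i, k i * m i) *
        (1 - y) ^ (∑ i, n i * m i - ∑ i, k i * m i) := by
  have hdeg : ∑ i, (n i - k i) * m i = ∑ i, n i * m i - ∑ i, k i * m i := by
    simp only [Nat.sub_mul]
    exact sum_tsub_distrib _ fun i _ => Nat.mul_le_mul_right _ (hk i)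
  simp only [mul_pow, prod_mul_distrib, ← pow_mul, prod_pow_eq_pow_sum, hdeg]

theorem pow_mul_one_sub_pow_eq_sum (y : R) (K d : ℕ) :
    y ^ K * (1 - y) ^ d = ∑ l ∈ range (d + 1), (d.choose l : R) * (-1) ^ l * y ^ (K + l) := by
  rw [sub_eq_neg_add, add_pow, mul_sum]
  refine sum_congr rfl fun l _ => ?_
  rw [neg_pow, one_pow, mul_one, pow_add]
  ring

end CommRing

noncomputable def volkenbornSum (p : ℕ) [Fact p.Prime] (f : ℕ → ℚ_[p]) (N : ℕ) : ℚ_[p] :=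
  1 / (p : ℚ_[p]) ^ N * ∑ x ∈ range (p ^ N), f x

section VolkenbornSum

variable {p : ℕ} [Fact p.Prime]

theorem volkenbornSum_sum_mul {ι : Type*} (s : Finset ι) (c : ι → ℚ_[p]) (f : ι → ℕ → ℚ_[p])
    (N : ℕ) :
    volkenbornSum p (fun x => ∑ l ∈ s, c l * f l x) N =
      ∑ l ∈ s, c l * volkenbornSum p (f l) N := by
  simp only [volkenbornSum, mul_sum, sum_comm (s := range _) (t := s)]
  exact sum_congr rfl fun l _ => sum_congr rfl fun x _ => by ring

theorem volkenbornSum_pow (n N : ℕ) :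
    volkenbornSum p (fun x => (x : ℚ_[p]) ^ n) N =
      ∑ i ∈ range (n + 1),
        ((bernoulli i * (n + 1).choose i / (n + 1) : ℚ) : ℚ_[p]) * ((p : ℚ_[p]) ^ N) ^ (n - i) := by
  have hp : (p : ℚ_[p]) ^ N ≠ 0 := pow_ne_zero _ (Nat.cast_ne_zero.mpr (Fact.out : p.Prime).ne_zero)
  have faulhaber := congrArg (fun q : ℚ => (q : ℚ_[p])) (sum_range_pow (p ^ N) n)
  push_cast at faulhaber
  rw [volkenbornSum, faulhaber, mul_sum]
  refine sum_congr rfl fun i hi => ?_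
  rw [Nat.sub_add_comm (Nat.lt_succ_iff.mp (mem_range.mp hi)), pow_succ]
  have hn : (n : ℚ_[p]) + 1 ≠ 0 := Nat.cast_add_one_ne_zero n
  push_cast
  field_simp

theorem tendsto_volkenbornSum_pow (n : ℕ) :
    Tendsto (volkenbornSum p fun x => (x : ℚ_[p]) ^ n) atTop (𝓝 (bernoulli n : ℚ_[p])) := by
  set b : ℕ → ℚ_[p] := fun i => ((bernoulli i * (n + 1).choose i / (n + 1) : ℚ) : ℚ_[p])
  set g : ℚ_[p] → ℚ_[p] := fun P => ∑ i ∈ range (n + 1), b i * P ^ (n - i)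
  have hg0 : g 0 = bernoulli n := by
    show ∑ i ∈ range (n + 1), b i * 0 ^ (n - i) = _
    rw [sum_range_succ, sum_eq_zero fun i hi => by
      rw [zero_pow (Nat.sub_ne_zero_of_lt (mem_range.mp hi)), mul_zero]]
    have hn : (n : ℚ_[p]) + 1 ≠ 0 := Nat.cast_add_one_ne_zero n
    simp [b, Nat.choose_succ_self_right, hn]
  have hpN : Tendsto (fun N => (p : ℚ_[p]) ^ N) atTop (𝓝 0) :=
    tendsto_pow_atTop_nhds_zero_of_norm_lt_one Padic.norm_p_lt_one
  have hg : Continuous g := by fun_prop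
  rw [← hg0, funext (volkenbornSum_pow n)]
  exact (hg.tendsto 0).comp hpN

theorem tendsto_volkenbornSum_sum_mul_pow {ι : Type*} (s : Finset ι) (c : ι → ℚ) (e : ι → ℕ) :
    Tendsto (volkenbornSum p fun x => ∑ l ∈ s, (c l : ℚ_[p]) * (x : ℚ_[p]) ^ e l) atTop
      (𝓝 ((∑ l ∈ s, c l * bernoulli (e l) : ℚ) : ℚ_[p])) := by
  simp only [funext (volkenbornSum_sum_mul s _ _), Rat.cast_sum, Rat.cast_mul]
  exact tendsto_finsetSum _ fun l _ => (tendsto_volkenbornSum_pow (e l)).const_mul _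

end VolkenbornSum

theorem volkenborn_bernstein_general_prod_general (p : ℕ) [Fact p.Prime] (s : ℕ)
    (k n m : Fin s → ℕ) (hk : ∀ i, k i ≤ n i) :
    Filter.Tendsto
      (fun N : ℕ => (1 / (p : ℚ_[p]) ^ N) *
        ∑ x ∈ Finset.range (p ^ N), ∏ i : Fin s,
          (((n i).choose (k i) : ℚ_[p]) * (x : ℚ_[p]) ^ (k i) *
            (1 - (x : ℚ_[p])) ^ (n i - k i)) ^ (m i))
      Filter.atTop
      (nhds (((∏ i : Fin s, ((n i).choose (k i) : ℚ) ^ (m i)) *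
        ∑ l ∈ Finset.range ((∑ i : Fin s, n i * m i) - (∑ i : Fin s, k i * m i) + 1),
          (((∑ i : Fin s, n i * m i) - (∑ i : Fin s, k i * m i)).choose l : ℚ) *
            (-1 : ℚ) ^ l *
            bernoulli ((∑ i : Fin s, k i * m i) + l) : ℚ) : ℚ_[p])) := by
  set C := ∏ i, ((n i).choose (k i) : ℚ) ^ m i with hC
  set K := ∑ i, k i * m i with hK
  set d := ∑ i, n i * m i - K with hd
  have hint : ∀ y : ℚ_[p],
      ∏ i, (((n i).choose (k i) : ℚ_[p]) * y ^ k i * (1 - y) ^ (n i - k i)) ^ m i =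
        ∑ l ∈ range (d + 1), ((C * d.choose l * (-1) ^ l : ℚ) : ℚ_[p]) * y ^ (K + l) := by
    intro y
    rw [hC, hd, hK, prod_bernstein_pow_eq_mul k n m hk, mul_assoc, pow_mul_one_sub_pow_eq_sum,
      mul_sum]
    push_cast
    exact sum_congr rfl fun l _ => by ring
  have hlimit : C * ∑ l ∈ range (d + 1), (d.choose l : ℚ) * (-1) ^ l * bernoulli (K + l) =
      ∑ l ∈ range (d + 1), C * d.choose l * (-1) ^ l * bernoulli (K + l) := by
    rw [mul_sum]
    exact sum_congr rfl fun l _ => by ring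
  have h := tendsto_volkenbornSum_sum_mul_pow (p := p) (range (d + 1))
    (fun l => C * d.choose l * (-1) ^ l) (fun l => K + l)
  simp only [← hint] at h
  rwa [hlimit]

/-- `∫_{ℤ_p} B_{k₁,n₁}^{m₁}(x) ⋯ B_{k_s,n_s}^{m_s}(x) dμ₁(x)
    = C(n₁,k₁)^{m₁} ⋯ C(n_s,k_s)^{m_s} ∑_{l=0}^{T−K} C(T−K,l)(−1)^l B_{K+l}`,
where `K = k₁m₁ + ⋯ + k_s m_s` and `T = n₁m₁ + ⋯ + n_s m_s`. -/
theorem volkenborn_bernstein_general_prod (p : ℕ) [Fact p.Prime] (s : ℕ) (hs : 1 ≤ s)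
    (k n m : Fin s → ℕ) (hk : ∀ i, k i ≤ n i) :
    Filter.Tendsto
      (fun N : ℕ => (1 / (p : ℚ_[p]) ^ N) *
        ∑ x ∈ Finset.range (p ^ N), ∏ i : Fin s,
          (((n i).choose (k i) : ℚ_[p]) * (x : ℚ_[p]) ^ (k i) *
            (1 - (x : ℚ_[p])) ^ (n i - k i)) ^ (m i))
      Filter.atTop
      (nhds (((∏ i : Fin s, ((n i).choose (k i) : ℚ) ^ (m i)) *
        ∑ l ∈ Finset.range ((∑ i : Fin s, n i * m i) - (∑ i : Fin s, k i * m i) + 1),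
          (((∑ i : Fin s, n i * m i) - (∑ i : Fin s, k i * m i)).choose l : ℚ) *
            (-1 : ℚ) ^ l *
            bernoulli ((∑ i : Fin s, k i * m i) + l) : ℚ) : ℚ_[p])) :=
  volkenborn_bernstein_general_prod_general p s k n m hk
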